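/- For every constant K > 0 there exist constants L > 1 and z₀ > 0 such that: whenever 0 < q, a > 0, and L·a ≤ b ≤ z₀/q, one has (2/q)·∫_{aq}^{bq} g(z) dz ≤ (b−a)·(g(aq) + g(bq)) − K·b, where g(z) = −log(β(1−e^{−z})) and β(u) = (u+√(u(4−3u)))/2. -/

import Mathlib

noncomputable def betaFn (u : ℝ) : ℝ := (u + Real.sqrt (u * (4 - 3 * u))) / 2

noncomputable def gFn (z : ℝ) : ℝ := - Real.log (betaFn (1 - Real.exp (-z)))

/-!
Near `0` the function `g` is `-(log z) / 2` up to a bounded error, because `β(u) ≍ √u` and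
`1 - e^{-z} ≍ z`. Replacing `g` by `-(log z) / 2 ± C` in the integral and at the two endpoints,
the trapezoid defect `(B - A)(g A + g B) - 2 ∫_A^B g` is at least
`(A + B)/2 · log (B/A) - O(B)`, which beats `K B` once `B/A` is large. The statement for `a, b, q`
is this one for `A = a q`, `B = b q`, divided by `q`.
-/

open Real Set MeasureTheory intervalIntegral

lemma betaFn_pos {u : ℝ} (hu : 0 < u) : 0 < betaFn u := by
  unfold betaFn
  positivity

lemma sqrt_div_two_le_betaFn {u : ℝ} (h0 : 0 ≤ u) (h1 : u ≤ 1) : √u / 2 ≤ betaFn u := by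
  have : √u ≤ √(u * (4 - 3 * u)) := sqrt_le_sqrt (by nlinarith)
  unfold betaFn
  linarith

lemma betaFn_le_two_mul_sqrt {u : ℝ} (h0 : 0 ≤ u) (h1 : u ≤ 1) : betaFn u ≤ 2 * √u := by
  have hroot : √(u * (4 - 3 * u)) ≤ 2 * √u := by
    calc √(u * (4 - 3 * u)) ≤ √(2 ^ 2 * u) := sqrt_le_sqrt (by nlinarith)
      _ = 2 * √u := by rw [sqrt_mul (by norm_num), sqrt_sq (by norm_num)]
  have hu : u ≤ √u := (le_sqrt h0 h0).2 (by nlinarith)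
  unfold betaFn
  linarith

lemma abs_log_betaFn_sub_half_log_le {u : ℝ} (h0 : 0 < u) (h1 : u ≤ 1) :
    |log (betaFn u) - log u / 2| ≤ log 2 := by
  have hs : 0 < √u := sqrt_pos.2 h0
  rw [← log_sqrt h0.le, abs_le]
  constructor
  · have := log_le_log (by positivity) (sqrt_div_two_le_betaFn h0.le h1)
    rw [log_div hs.ne' two_ne_zero] at this
    linarith
  · have := log_le_log (betaFn_pos h0) (betaFn_le_two_mul_sqrt h0.le h1)
    rw [log_mul two_ne_zero hs.ne'] at this
    linarith

lemma abs_log_one_sub_exp_neg_sub_log_le {z : ℝ} (h0 : 0 < z) (h1 : z ≤ 1) :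
    |log (1 - exp (-z)) - log z| ≤ log 2 := by
  have hupper : 1 - exp (-z) ≤ z := by linarith [add_one_le_exp (-z)]
  have hlower : z / 2 ≤ 1 - exp (-z) := by
    have hinv : exp (-z) ≤ (z + 1)⁻¹ := by
      rw [exp_neg]
      exact inv_anti₀ (by linarith) (by linarith [add_one_le_exp z])
    have : (z + 1)⁻¹ ≤ 1 - z / 2 := by
      rw [inv_le_iff_one_le_mul₀ (by linarith)]
      nlinarith
    linarith
  rw [abs_le]
  constructor
  · have := log_le_log (by positivity) hlower
    rw [log_div h0.ne' two_ne_zero] at this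
    linarith
  · linarith [log_le_log ((by positivity : (0:ℝ) < z / 2).trans_le hlower) hupper,
      log_pos one_lt_two]

lemma abs_gFn_add_half_log_le {z : ℝ} (h0 : 0 < z) (h1 : z ≤ 1) :
    |gFn z + log z / 2| ≤ 3 / 2 * log 2 := by
  have hexp : exp (-z) < 1 := exp_lt_one_iff.2 (neg_lt_zero.2 h0)
  have hu := abs_le.1 (abs_log_one_sub_exp_neg_sub_log_le h0 h1)
  have hβ := abs_le.1 (abs_log_betaFn_sub_half_log_le (u := 1 - exp (-z)) (by linarith)
    (by linarith [exp_pos (-z)]))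
  unfold gFn
  rw [abs_le]
  constructor <;> linarith [hu.1, hu.2, hβ.1, hβ.2]

lemma continuousOn_gFn : ContinuousOn gFn (Ioi 0) := by
  have hβ : Continuous fun z : ℝ => betaFn (1 - exp (-z)) := by
    unfold betaFn
    fun_prop
  refine (hβ.continuousOn.log fun z hz => (betaFn_pos ?_).ne').neg
  linarith [exp_lt_one_iff.2 (neg_lt_zero.2 (mem_Ioi.1 hz))]

section LogSingularity

variable {g : ℝ → ℝ} {A B C : ℝ}

lemma integral_le_of_le_neg_half_log_add (hAB : A ≤ B) (hg : IntervalIntegrable g volume A B)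
    (hle : ∀ z ∈ Icc A B, g z ≤ -log z / 2 + C) :
    ∫ z in A..B, g z ≤ -(B * log B - A * log A - B + A) / 2 + C * (B - A) := by
  have hlog : IntervalIntegrable (fun z => -log z / 2) volume A B :=
    intervalIntegrable_log'.neg.div_const 2
  calc ∫ z in A..B, g z ≤ ∫ z in A..B, (-log z / 2 + C) :=
        integral_mono_on hAB hg (hlog.add intervalIntegrable_const) hle
    _ = -(B * log B - A * log A - B + A) / 2 + C * (B - A) := by
        rw [integral_add hlog intervalIntegrable_const, intervalIntegral.integral_div,
          intervalIntegral.integral_neg, integral_log, intervalIntegral.integral_const, smul_eq_mul]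
        ring

theorem two_mul_integral_le_trapezoid_sub {K z₀ : ℝ} (hbound : ∀ z ∈ Ioc 0 z₀, |g z + log z / 2| ≤ C)
    (hg : ContinuousOn g (Ioc 0 z₀)) (hK : 0 ≤ K) (hA : 0 < A)
    (hAB : exp (2 * (K + 1 + 4 * C)) * A ≤ B) (hB : B ≤ z₀) :
    2 * ∫ z in A..B, g z ≤ (B - A) * (g A + g B) - K * B := by
  have hC : 0 ≤ C := (abs_nonneg _).trans (hbound B ⟨(mul_pos (exp_pos _) hA).trans_le hAB, hB⟩)
  have hAB' : A ≤ B := (le_mul_of_one_le_left hA.le (one_le_exp (by positivity))).trans hAB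
  have hsub : Icc A B ⊆ Ioc 0 z₀ := fun z hz => ⟨hA.trans_le hz.1, hz.2.trans hB⟩
  have hint := integral_le_of_le_neg_half_log_add (C := C) hAB'
    ((hg.mono hsub).intervalIntegrable_of_Icc hAB')
    (fun z hz => by linarith [(abs_le.1 (hbound z (hsub hz))).2])
  have hgA : -log A / 2 - C ≤ g A := by
    linarith [(abs_le.1 (hbound A (hsub ⟨le_rfl, hAB'⟩))).1]
  have hgB : -log B / 2 - C ≤ g B := by
    linarith [(abs_le.1 (hbound B (hsub ⟨hAB', le_rfl⟩))).1]
  have hD : 2 * (K + 1 + 4 * C) ≤ log B - log A := by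
    have := log_le_log (by positivity) hAB
    rw [log_mul (exp_pos _).ne' hA.ne', log_exp] at this
    linarith
  nlinarith [mul_le_mul_of_nonneg_left (add_le_add hgA hgB) (sub_nonneg.2 hAB'),
    mul_nonneg (add_pos hA (hA.trans_le hAB')).le (sub_nonneg.2 hD),
    mul_nonneg hA.le (by positivity : 0 ≤ K + 1 + 4 * C)]

end LogSingularity

theorem leaving_the_diagonal :
    ∀ K > (0:ℝ), ∃ L > (1:ℝ), ∃ z₀ > (0:ℝ), ∀ q a b : ℝ,
      0 < q → 0 < a → L * a ≤ b → b ≤ z₀ / q →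
      (2 / q) * (∫ z in (a * q)..(b * q), gFn z) ≤
        (b - a) * (gFn (a * q) + gFn (b * q)) - K * b := by
  intro K hK
  refine ⟨exp (2 * (K + 1 + 4 * (3 / 2 * log 2))), one_lt_exp_iff.2 (by positivity), 1, one_pos,
    fun q a b hq ha hab hb => ?_⟩
  have h := two_mul_integral_le_trapezoid_sub (fun z hz => abs_gFn_add_half_log_le hz.1 hz.2)
    (continuousOn_gFn.mono Ioc_subset_Ioi_self) hK.le (mul_pos ha hq)
    (by rw [← mul_assoc]; exact mul_le_mul_of_nonneg_right hab hq.le) ((le_div_iff₀ hq).1 hb)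
  calc 2 / q * ∫ z in (a * q)..(b * q), gFn z = (2 * ∫ z in (a * q)..(b * q), gFn z) / q := by
        ring
    _ ≤ ((b * q - a * q) * (gFn (a * q) + gFn (b * q)) - K * (b * q)) / q :=
        div_le_div_of_nonneg_right h hq.le
    _ = (b - a) * (gFn (a * q) + gFn (b * q)) - K * b := by
        field_simp
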